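/- arXiv:2505.05657 — 2 statements merged into one kernel-verified Lean document; each statement's English description precedes it below -/
import Mathlib

section
/- Fix natural numbers L (number of observed STFT frames), Fq (number of frequency bins), K ≥ 1 (number of sources), F and P (future and past filter taps), and let J = Finset.Icc (-(F : ℤ)) (P : ℤ) be the tap index set. Let X : Fin L → Fin Fq → ℂ be the observed mixture, let Ŝ₁, …, Ŝ_K : ℤ → Fin Fq → ℂ be source estimates, let σ_N > 0 and c₀ > 0. Define the Gaussian log-likelihood of a filter tuple (G₁, …, G_K) (each G_k : J → Fin Fq → ℂ) as ℓ(G₁,…,G_K) = Real.log (c₀ * Real.exp (-(1/(2 σ_N²)) * Σ_{l ∈ Fin L} Σ_{f ∈ Fin Fq} ‖X l f − Σ_{k=1}^{K} (G_k *_l Ŝ_k)(l, f)‖²)). Assume the filtered source subspaces are pairwise orthogonal: for all k ≠ k′ and all filters G, G′ : J → Fin Fq → ℂ, Σ_{l ∈ Fin L} Σ_{f ∈ Fin Fq} (G *_l Ŝ_k)(l,f) * conj((G′ *_l Ŝ_{k′})(l,f)) = 0. Then a tuple (Ĝ₁, …, Ĝ_K) maximizes ℓ over all filter tuples if and only if for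 every k ∈ {1,…,K}, Ĝ_k minimizes the FCP objective G ↦ Σ_{l ∈ Fin L} Σ_{f ∈ Fin Fq} ‖X l f − (G *_l Ŝ_k)(l, f)‖² over all filters G : J → Fin Fq → ℂ. (Theorem 1: FCP with the constant weight λ = 1/(2σ_N²) is the maximum-likelihood relative-RIR estimator.) -/
/-!
Viewing the (frame, frequency) arrays as vectors of `EuclideanSpace ℂ (Fin L × Fin Fq)`, the
orthogonality hypothesis makes the filtered sources `Y k = G k *_l Ŝ k` pairwise orthogonal, and
Pythagoras separates the mixture residual:
`‖X - ∑ k, Y k‖² = ∑ k, ‖X - Y k‖² - (K - 1) ‖X‖²`.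
The log-likelihood is `log c₀ - ‖X - ∑ k, Y k‖² / (2 σ_N²)`, a strictly decreasing function of
the residual, so it is maximized exactly when `∑ k, FCP_k (G k)` is minimized; as the `G k` are
independent variables, this happens exactly when each summand is minimized.
-/

open Finset

/-- Frame-domain convolution of a filter `G` (supported on the tap set
`J = Finset.Icc (-(F : ℤ)) (P : ℤ)`) with a source `S`:
`(G *_l S)(l, f) = ∑_{j ∈ J} G j f * S (l - j) f`. -/
noncomputable def frameConv (L Fq F P : ℕ)
    (G : ↥(Finset.Icc (-(F : ℤ)) (P : ℤ)) → Fin Fq → ℂ)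
    (S : ℤ → Fin Fq → ℂ) (l : Fin L) (f : Fin Fq) : ℂ :=
  ∑ j : ↥(Finset.Icc (-(F : ℤ)) (P : ℤ)), G j f * S ((l : ℤ) - (j : ℤ)) f

/-- The FCP objective for a single source estimate `S` with constant weight:
`G ↦ ∑_{l,f} ‖X l f − (G *_l S)(l, f)‖²`. -/
noncomputable def fcpObjective (L Fq F P : ℕ) (X : Fin L → Fin Fq → ℂ)
    (S : ℤ → Fin Fq → ℂ)
    (G : ↥(Finset.Icc (-(F : ℤ)) (P : ℤ)) → Fin Fq → ℂ) : ℝ :=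
  ∑ l : Fin L, ∑ f : Fin Fq, ‖X l f - frameConv L Fq F P G S l f‖ ^ 2

/-- The Gaussian log-likelihood of a filter tuple `(G 1, …, G K)`:
`ℓ(G) = log (c₀ * exp (-(1/(2 σ_N²)) * ∑_{l,f} ‖X l f − ∑_k (G_k *_l Ŝ_k)(l,f)‖²))`. -/
noncomputable def logLik (L Fq K F P : ℕ) (X : Fin L → Fin Fq → ℂ)
    (S : Fin K → ℤ → Fin Fq → ℂ) (σN c₀ : ℝ)
    (G : Fin K → ↥(Finset.Icc (-(F : ℤ)) (P : ℤ)) → Fin Fq → ℂ) : ℝ :=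
  Real.log (c₀ * Real.exp (-(1 / (2 * σN ^ 2)) *
    ∑ l : Fin L, ∑ f : Fin Fq,
      ‖X l f - ∑ k : Fin K, frameConv L Fq F P (G k) (S k) l f‖ ^ 2))

open scoped InnerProductSpace ComplexConjugate

section Orthogonal

variable {𝕜 E ι : Type*} [RCLike 𝕜] [NormedAddCommGroup E] [InnerProductSpace 𝕜 E]

theorem norm_sum_sq_of_pairwise_inner_eq_zero {s : Finset ι} {y : ι → E}
    (h : (s : Set ι).Pairwise fun i j => ⟪y i, y j⟫_𝕜 = 0) :
    ‖∑ i ∈ s, y i‖ ^ 2 = ∑ i ∈ s, ‖y i‖ ^ 2 := by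
  classical
  induction s using Finset.induction_on with
  | empty => simp
  | insert a s ha ih =>
    have hs : (s : Set ι).Pairwise fun i j => ⟪y i, y j⟫_𝕜 = 0 := h.mono (by simp)
    have ha_orth : ⟪y a, ∑ i ∈ s, y i⟫_𝕜 = 0 := by
      rw [inner_sum]
      exact Finset.sum_eq_zero fun i hi =>
        h (by simp) (by simp [hi]) (ne_of_mem_of_not_mem hi ha).symm
    rw [Finset.sum_insert ha, Finset.sum_insert ha, @norm_add_sq 𝕜, ha_orth, ih hs]
    simp

theorem norm_sub_sum_sq_of_pairwise_inner_eq_zero (x : E) {s : Finset ι} {y : ι → E}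
    (h : (s : Set ι).Pairwise fun i j => ⟪y i, y j⟫_𝕜 = 0) :
    ‖x - ∑ i ∈ s, y i‖ ^ 2 = ∑ i ∈ s, ‖x - y i‖ ^ 2 - (#s - 1) * ‖x‖ ^ 2 := by
  simp only [@norm_sub_sq 𝕜, inner_sum, map_sum, norm_sum_sq_of_pairwise_inner_eq_zero h,
    Finset.sum_add_distrib, Finset.sum_sub_distrib, Finset.sum_const, nsmul_eq_mul,
    Finset.mul_sum]
  ring

end Orthogonal

section Uncurry

variable {𝕜 α β : Type*} [RCLike 𝕜] [Fintype α] [Fintype β]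

theorem EuclideanSpace.norm_sq_toLp_uncurry (a : α → β → 𝕜) :
    ‖(WithLp.toLp 2 (Function.uncurry a) : EuclideanSpace 𝕜 (α × β))‖ ^ 2 =
      ∑ i, ∑ j, ‖a i j‖ ^ 2 := by
  rw [EuclideanSpace.norm_sq_eq, Fintype.sum_prod_type]
  rfl

theorem EuclideanSpace.inner_toLp_uncurry (a b : α → β → 𝕜) :
    ⟪(WithLp.toLp 2 (Function.uncurry a) : EuclideanSpace 𝕜 (α × β)),
      WithLp.toLp 2 (Function.uncurry b)⟫_𝕜 = ∑ i, ∑ j, b i j * conj (a i j) := by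
  rw [PiLp.inner_apply, Fintype.sum_prod_type]
  simp only [RCLike.inner_apply]
  rfl

end Uncurry

theorem sum_sum_norm_sub_sum_sq_of_pairwise_orthogonal {𝕜 α β ι : Type*} [RCLike 𝕜]
    [Fintype α] [Fintype β] [Fintype ι] (x : α → β → 𝕜) (y : ι → α → β → 𝕜)
    (h : Pairwise fun k k' => ∑ i, ∑ j, y k i j * conj (y k' i j) = 0) :
    ∑ i, ∑ j, ‖x i j - ∑ k, y k i j‖ ^ 2 =
      ∑ k, ∑ i, ∑ j, ‖x i j - y k i j‖ ^ 2 - (Fintype.card ι - 1) * ∑ i, ∑ j, ‖x i j‖ ^ 2 := by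
  let toE : (α → β → 𝕜) → EuclideanSpace 𝕜 (α × β) := fun a => WithLp.toLp 2 (Function.uncurry a)
  have horth : ((Finset.univ : Finset ι) : Set ι).Pairwise
      fun k k' => ⟪toE (y k), toE (y k')⟫_𝕜 = 0 :=
    fun k _ k' _ hkk' => (EuclideanSpace.inner_toLp_uncurry _ _).trans (h hkk'.symm)
  have hsub_sum : toE x - ∑ k, toE (y k) = toE fun i j => x i j - ∑ k, y k i j := by
    ext ⟨i, j⟩
    simp [toE]
  have hsub : ∀ k, toE x - toE (y k) = toE fun i j => x i j - y k i j := fun k => by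
    ext ⟨i, j⟩
    simp [toE]
  have := norm_sub_sum_sq_of_pairwise_inner_eq_zero (toE x) horth
  simpa only [hsub_sum, hsub, Finset.card_univ, toE, EuclideanSpace.norm_sq_toLp_uncurry]
    using this

theorem forall_sum_le_sum_iff_forall_le {ι : Type*} [Fintype ι] [DecidableEq ι]
    {α : ι → Type*} (φ : ∀ i, α i → ℝ) (a : ∀ i, α i) :
    (∀ b : ∀ i, α i, ∑ i, φ i (a i) ≤ ∑ i, φ i (b i)) ↔ ∀ i c, φ i (a i) ≤ φ i c := by
  refine ⟨fun h i c => ?_, fun h b => Finset.sum_le_sum fun i _ => h i (b i)⟩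
  have sum_update : ∀ c, ∑ j, φ j (Function.update a i c j) =
      φ i c + ∑ j ∈ Finset.univ \ {i}, φ j (a j) := fun c => by
    simp only [Function.apply_update φ, Finset.sum_update_of_mem (Finset.mem_univ i)]
  have := h (Function.update a i c)
  rwa [sum_update, ← Function.update_eq_self i a, sum_update, Function.update_eq_self,
    add_le_add_iff_right] at this

theorem logLik_eq {L Fq K F P : ℕ} (X : Fin L → Fin Fq → ℂ) (S : Fin K → ℤ → Fin Fq → ℂ)
    (σN : ℝ) {c₀ : ℝ} (hc : c₀ ≠ 0) (G : Fin K → ↥(Finset.Icc (-(F : ℤ)) (P : ℤ)) → Fin Fq → ℂ) :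
    logLik L Fq K F P X S σN c₀ G = Real.log c₀ - 1 / (2 * σN ^ 2) *
      ∑ l : Fin L, ∑ f : Fin Fq, ‖X l f - ∑ k : Fin K, frameConv L Fq F P (G k) (S k) l f‖ ^ 2 := by
  rw [logLik, Real.log_mul hc (Real.exp_ne_zero _), Real.log_exp]
  ring

theorem fcp_is_maximum_likelihood_general
    (L Fq K F P : ℕ)
    (X : Fin L → Fin Fq → ℂ) (Shat : Fin K → ℤ → Fin Fq → ℂ)
    (σN c₀ : ℝ) (hσ : 0 < σN) (hc : 0 < c₀)
    (horth : ∀ k k' : Fin K, k ≠ k' →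
      ∀ G G' : ↥(Finset.Icc (-(F : ℤ)) (P : ℤ)) → Fin Fq → ℂ,
        ∑ l : Fin L, ∑ f : Fin Fq,
          frameConv L Fq F P G (Shat k) l f *
            (starRingEnd ℂ) (frameConv L Fq F P G' (Shat k') l f) = 0)
    (Ghat : Fin K → ↥(Finset.Icc (-(F : ℤ)) (P : ℤ)) → Fin Fq → ℂ) :
    (∀ G : Fin K → ↥(Finset.Icc (-(F : ℤ)) (P : ℤ)) → Fin Fq → ℂ,
        logLik L Fq K F P X Shat σN c₀ G ≤ logLik L Fq K F P X Shat σN c₀ Ghat)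
      ↔ (∀ k : Fin K, ∀ G : ↥(Finset.Icc (-(F : ℤ)) (P : ℤ)) → Fin Fq → ℂ,
          fcpObjective L Fq F P X (Shat k) (Ghat k)
            ≤ fcpObjective L Fq F P X (Shat k) G) := by
  have hweight : 0 < 1 / (2 * σN ^ 2) := by positivity
  have hlogLik : ∀ G, logLik L Fq K F P X Shat σN c₀ G = Real.log c₀
      + 1 / (2 * σN ^ 2) * ((K - 1) * ∑ l, ∑ f, ‖X l f‖ ^ 2)
      - 1 / (2 * σN ^ 2) * ∑ k, fcpObjective L Fq F P X (Shat k) (G k) := fun G => by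
    rw [logLik_eq X Shat σN hc.ne', sum_sum_norm_sub_sum_sq_of_pairwise_orthogonal X
      (fun k => frameConv L Fq F P (G k) (Shat k)) fun k k' hkk' => horth k k' hkk' (G k) (G k'),
      Fintype.card_fin]
    unfold fcpObjective
    ring
  rw [← forall_sum_le_sum_iff_forall_le (fun k => fcpObjective L Fq F P X (Shat k)) Ghat]
  refine forall_congr' fun G => ?_
  rw [hlogLik, hlogLik, sub_le_sub_iff_left, mul_le_mul_iff_of_pos_left hweight]

/-- **Theorem 1 (FCP is the maximum-likelihood relative-RIR estimator).**
Under pairwise orthogonality of the filtered source subspaces, a filter tuple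
`(Ĝ 1, …, Ĝ K)` maximizes the Gaussian log-likelihood if and only if each `Ĝ k`
minimizes the FCP objective for source `k`. -/
theorem fcp_is_maximum_likelihood
    (L Fq K F P : ℕ) (hK : 1 ≤ K)
    (X : Fin L → Fin Fq → ℂ) (Shat : Fin K → ℤ → Fin Fq → ℂ)
    (σN c₀ : ℝ) (hσ : 0 < σN) (hc : 0 < c₀)
    (horth : ∀ k k' : Fin K, k ≠ k' →
      ∀ G G' : ↥(Finset.Icc (-(F : ℤ)) (P : ℤ)) → Fin Fq → ℂ,
        ∑ l : Fin L, ∑ f : Fin Fq,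
          frameConv L Fq F P G (Shat k) l f *
            (starRingEnd ℂ) (frameConv L Fq F P G' (Shat k') l f) = 0)
    (Ghat : Fin K → ↥(Finset.Icc (-(F : ℤ)) (P : ℤ)) → Fin Fq → ℂ) :
    (∀ G : Fin K → ↥(Finset.Icc (-(F : ℤ)) (P : ℤ)) → Fin Fq → ℂ,
        logLik L Fq K F P X Shat σN c₀ G ≤ logLik L Fq K F P X Shat σN c₀ Ghat)
      ↔ (∀ k : Fin K, ∀ G : ↥(Finset.Icc (-(F : ℤ)) (P : ℤ)) → Fin Fq → ℂ,
          fcpObjective L Fq F P X (Shat k) (Ghat k)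
            ≤ fcpObjective L Fq F P X (Shat k) G) :=
  fcp_is_maximum_likelihood_general L Fq K F P X Shat σN c₀ hσ hc horth Ghat
end

section
/- Let n ≥ 1 and let p : EuclideanSpace ℝ (Fin n) → ℝ be a measurable function with p ≥ 0, ∫ p(s) ds = 1, and ∫ ‖s‖ * p(s) ds < ∞. Fix σ > 0 and let φ_σ(y) = (2 π σ²)^(−n/2) * Real.exp (−‖y‖² / (2 σ²)) denote the isotropic Gaussian kernel. Define the smoothed density p_σ(x) = ∫ p(s) * φ_σ(x − s) ds and the posterior mean m(x) = (∫ p(s) * φ_σ(x − s) • s ds) / p_σ(x). Then for every x: p_σ(x) > 0; the function x ↦ Real.log (p_σ x) is differentiable at x; and its gradient satisfies ∇ (fun x => Real.log (p_σ x)) x = (σ²)⁻¹ • (m x − x) (Tweedie's formula: the score of the Gaussian-smoothed density equals (E[s | x] − x)/σ²). -/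
open MeasureTheory

/-!
Differentiating under the integral sign gives `∇p_σ(x) = ∫ p(s) ∇φ_σ(x - s) ds`, that is
`σ⁻² ∫ p(s) φ_σ(x - s) (s - x) ds = σ⁻² p_σ(x) (m(x) - x)`;
this is legitimate because `φ_σ` is bounded and so is its gradient `-σ⁻² φ_σ(u) u`, as
`t e^{-t²/(2σ²)} ≤ σ`. Since `p_σ > 0`, the chain rule for `log` divides by `p_σ(x)`.
-/

theorem mul_exp_neg_sq_div_le {σ : ℝ} (hσ : 0 < σ) (t : ℝ) :
    t * Real.exp (-t ^ 2 / (2 * σ ^ 2)) ≤ σ := by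
  rw [neg_div, Real.exp_neg, ← div_eq_mul_inv, div_le_iff₀ (Real.exp_pos _)]
  calc t ≤ σ * (t ^ 2 / (2 * σ ^ 2) + 1) := by
        field_simp
        nlinarith [sq_nonneg (t - σ)]
    _ ≤ σ * Real.exp (t ^ 2 / (2 * σ ^ 2)) := by
        gcongr
        exact Real.add_one_le_exp _

theorem HasGradientAt.log {E : Type*} [NormedAddCommGroup E] [InnerProductSpace ℝ E]
    [CompleteSpace E] {f : E → ℝ} {g x : E} (hf : HasGradientAt f g x) (hx : f x ≠ 0) :
    HasGradientAt (fun y => Real.log (f y)) ((f x)⁻¹ • g) x := by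
  rw [hasGradientAt_iff_hasFDerivAt, map_smul]
  exact hf.hasFDerivAt.log hx

theorem integral_mul_pos_of_pos {α : Type*} [MeasurableSpace α] {μ : Measure α}
    {f g : α → ℝ}
    (hf : 0 ≤ f) (hf_pos : 0 < ∫ a, f a ∂μ) (hg : ∀ a, 0 < g a)
    (hfg : Integrable (fun a => f a * g a) μ) :
    0 < ∫ a, f a * g a ∂μ := by
  rw [integral_pos_iff_support_of_nonneg hf (.of_integral_ne_zero hf_pos.ne')] at hf_pos
  rw [integral_pos_iff_support_of_nonneg (fun a => mul_nonneg (hf a) (hg a).le) hfg]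
  convert hf_pos using 2
  ext a
  simp [(hg a).ne']

section GaussianKernel

variable {E : Type*} [NormedAddCommGroup E] {c σ : ℝ}

noncomputable def gaussianKernel (c σ : ℝ) (y : E) : ℝ :=
  c * Real.exp (-‖y‖ ^ 2 / (2 * σ ^ 2))

lemma gaussianKernel_pos (hc : 0 < c) (y : E) : 0 < gaussianKernel c σ y :=
  mul_pos hc (Real.exp_pos _)

lemma gaussianKernel_nonneg (hc : 0 ≤ c) (y : E) : 0 ≤ gaussianKernel c σ y :=
  mul_nonneg hc (Real.exp_pos _).le

lemma norm_gaussianKernel_le (hc : 0 ≤ c) (y : E) : ‖gaussianKernel c σ y‖ ≤ c := by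
  rw [Real.norm_of_nonneg (gaussianKernel_nonneg hc y)]
  refine mul_le_of_le_one_right hc (Real.exp_le_one_iff.2 ?_)
  rw [neg_div, neg_nonpos]
  positivity

lemma gaussianKernel_mul_norm_le (hc : 0 ≤ c) (hσ : 0 < σ) (y : E) :
    gaussianKernel c σ y * ‖y‖ ≤ c * σ := by
  rw [gaussianKernel, mul_assoc, mul_comm (Real.exp _)]
  exact mul_le_mul_of_nonneg_left (mul_exp_neg_sq_div_le hσ ‖y‖) hc

@[fun_prop]
lemma continuous_gaussianKernel : Continuous (gaussianKernel c σ : E → ℝ) := by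
  unfold gaussianKernel
  fun_prop

lemma hasGradientAt_gaussianKernel [InnerProductSpace ℝ E] [CompleteSpace E] (hσ : σ ≠ 0)
    (u : E) :
    HasGradientAt (gaussianKernel c σ) (-(σ ^ 2)⁻¹ • gaussianKernel c σ u • u) u := by
  have h := (((hasStrictFDerivAt_norm_sq u).hasFDerivAt.const_mul
    (-(2 * σ ^ 2)⁻¹)).exp).const_mul c
  have hfun :
      gaussianKernel c σ = fun y : E => c * Real.exp (-(2 * σ ^ 2)⁻¹ * ‖y‖ ^ 2) := by
    funext y
    rw [gaussianKernel, neg_div, div_eq_inv_mul, neg_mul]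
  rw [hasGradientAt_iff_hasFDerivAt, hfun]
  refine h.congr_fderiv ?_
  ext v
  simp only [InnerProductSpace.toDual_apply_apply, real_inner_smul_left, smul_apply,
    innerSL_apply_apply, smul_eq_mul, nsmul_eq_mul, Nat.cast_ofNat]
  field_simp

end GaussianKernel

section Smoothing

variable {E : Type*} [NormedAddCommGroup E] [MeasurableSpace E] [BorelSpace E]
  {μ : Measure E} {p k : E → ℝ}

lemma MeasureTheory.Integrable.mul_comp_sub (hp : Integrable p μ) (hk : Continuous k) {C : ℝ}
    (hk_bdd : ∀ u, ‖k u‖ ≤ C) (x : E) :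
    Integrable (fun s => p s * k (x - s)) μ :=
  hp.mul_bdd (hk.comp (continuous_sub_left x)).aestronglyMeasurable
    (ae_of_all _ fun _ => hk_bdd _)

variable [InnerProductSpace ℝ E] [CompleteSpace E] [SecondCountableTopology E]

theorem hasGradientAt_integral_mul_comp_sub (hp : Integrable p μ) {k' : E → E}
    (hk : ∀ u, HasGradientAt k (k' u) u) (hk' : Continuous k') {C C' : ℝ}
    (hk_bdd : ∀ u, ‖k u‖ ≤ C) (hk'_bdd : ∀ u, ‖k' u‖ ≤ C') (x : E) :
    HasGradientAt (fun y => ∫ s, p s * k (y - s) ∂μ) (∫ s, p s • k' (x - s) ∂μ) x := by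
  have hk_cont : Continuous k := continuous_iff_continuousAt.2 fun u => (hk u).continuousAt
  have hF_int : ∀ y, Integrable (fun s => p s * k (y - s)) μ := hp.mul_comp_sub hk_cont hk_bdd
  have hF'_int : Integrable (fun s => p s • k' (x - s)) μ :=
    hp.smul_bdd C' (hk'.comp (continuous_sub_left x)).aestronglyMeasurable
      (ae_of_all _ fun _ => hk'_bdd _)
  have hF'_deriv : ∀ s y,
      HasFDerivAt (fun z => p s * k (z - s)) (innerSL ℝ (p s • k' (y - s))) y := by
    intro s y
    refine (((hk (y - s)).hasFDerivAt.comp y ((hasFDerivAt_id y).sub_const s)).const_mul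
      (p s)).congr_fderiv ?_
    ext v
    simp
  have hdual : InnerProductSpace.toDual ℝ E (∫ s, p s • k' (x - s) ∂μ) =
      ∫ s, innerSL ℝ (p s • k' (x - s)) ∂μ :=
    ((innerSL ℝ).integral_comp_comm hF'_int).symm
  rw [hasGradientAt_iff_hasFDerivAt, hdual]
  refine hasFDerivAt_integral_of_dominated_of_fderiv_le (bound := fun s => ‖p s‖ * C')
    Filter.univ_mem (.of_forall fun y => (hF_int y).aestronglyMeasurable) (hF_int x)
    ((innerSL ℝ).continuous.comp_aestronglyMeasurable hF'_int.aestronglyMeasurable) ?_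
    (hp.norm.mul_const C') (ae_of_all _ fun s y _ => hF'_deriv s y)
  refine ae_of_all _ fun s y _ => ?_
  rw [innerSL_apply_norm, norm_smul]
  exact mul_le_mul_of_nonneg_left (hk'_bdd _) (norm_nonneg _)

theorem hasGradientAt_integral_mul_gaussianKernel_comp_sub (hp : Integrable p μ)
    (hp_moment : Integrable (fun s => p s • s) μ) {c σ : ℝ} (hc : 0 ≤ c) (hσ : 0 < σ)
    (x : E) :
    HasGradientAt (fun y => ∫ s, p s * gaussianKernel c σ (y - s) ∂μ)
      ((σ ^ 2)⁻¹ • ((∫ s, (p s * gaussianKernel c σ (x - s)) • s ∂μ) -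
        (∫ s, p s * gaussianKernel c σ (x - s) ∂μ) • x)) x := by
  set k : E → ℝ := gaussianKernel c σ
  have hk_bdd : ∀ u, ‖k u‖ ≤ c := norm_gaussianKernel_le hc
  have hk'_bdd : ∀ u, ‖-(σ ^ 2)⁻¹ • k u • u‖ ≤ (σ ^ 2)⁻¹ * (c * σ) := by
    intro u
    rw [norm_smul, norm_smul, norm_neg, norm_inv, Real.norm_of_nonneg (sq_nonneg σ),
      Real.norm_of_nonneg (gaussianKernel_nonneg hc u)]
    exact mul_le_mul_of_nonneg_left (gaussianKernel_mul_norm_le hc hσ u) (by positivity)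
  have hgrad := hasGradientAt_integral_mul_comp_sub (μ := μ) hp
    (hasGradientAt_gaussianKernel hσ.ne') (by fun_prop) hk_bdd hk'_bdd x
  have hint_x : Integrable (fun s => (p s * k (x - s)) • x) μ :=
    (hp.mul_comp_sub continuous_gaussianKernel hk_bdd x).smul_const x
  have hint_s : Integrable (fun s => (p s * k (x - s)) • s) μ := by
    refine (hp_moment.bdd_smul c (continuous_gaussianKernel.comp
      (continuous_sub_left x)).aestronglyMeasurable (ae_of_all _ fun _ => hk_bdd _)).congr ?_
    refine ae_of_all _ fun s => ?_
    simp only [k, Pi.smul_apply', Function.comp_apply, smul_smul, mul_comm]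
  convert hgrad using 1
  calc (σ ^ 2)⁻¹ • ((∫ s, (p s * k (x - s)) • s ∂μ) -
        (∫ s, p s * k (x - s) ∂μ) • x)
    _ = (σ ^ 2)⁻¹ • ∫ s, (p s * k (x - s)) • s - (p s * k (x - s)) • x ∂μ := by
        rw [integral_sub hint_s hint_x, integral_smul_const]
    _ = ∫ s, (σ ^ 2)⁻¹ • ((p s * k (x - s)) • s - (p s * k (x - s)) • x) ∂μ :=
        (integral_smul _ _).symm
    _ = ∫ s, p s • (-(σ ^ 2)⁻¹ • k (x - s) • (x - s)) ∂μ := by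
        congr 1 with s
        module

end Smoothing

theorem tweedie_formula_general
    (n : ℕ)
    (p : EuclideanSpace ℝ (Fin n) → ℝ)
    (hp_nonneg : ∀ s, 0 ≤ p s)
    (hp_int : ∫ s, p s = 1)
    (hp_moment : Integrable (fun s : EuclideanSpace ℝ (Fin n) => ‖s‖ * p s))
    (σ : ℝ) (hσ : 0 < σ)
    (φ : EuclideanSpace ℝ (Fin n) → ℝ)
    (hφ : ∀ y, φ y =
      (2 * Real.pi * σ ^ 2) ^ (-(n : ℝ) / 2) * Real.exp (-‖y‖ ^ 2 / (2 * σ ^ 2)))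
    (pσ : EuclideanSpace ℝ (Fin n) → ℝ)
    (hpσ : ∀ x, pσ x = ∫ s, p s * φ (x - s))
    (m : EuclideanSpace ℝ (Fin n) → EuclideanSpace ℝ (Fin n))
    (hm : ∀ x, m x = (pσ x)⁻¹ • ∫ s, (p s * φ (x - s)) • s)
    (x : EuclideanSpace ℝ (Fin n)) :
    0 < pσ x ∧
    DifferentiableAt ℝ (fun y => Real.log (pσ y)) x ∧
    gradient (fun y => Real.log (pσ y)) x = (σ ^ 2)⁻¹ • (m x - x) := by
  have hp : Integrable p := .of_integral_ne_zero (by rw [hp_int]; exact one_ne_zero)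
  have hp_moment' : Integrable (fun s => p s • s) :=
    hp_moment.congr' (hp.aestronglyMeasurable.smul aestronglyMeasurable_id)
      (ae_of_all _ fun s => by rw [norm_smul, norm_mul, norm_norm, mul_comm])
  have hc : 0 < (2 * Real.pi * σ ^ 2) ^ (-(n : ℝ) / 2) := by positivity
  obtain rfl : φ = gaussianKernel _ σ := funext hφ
  obtain rfl : pσ = fun y => ∫ s, p s * gaussianKernel _ σ (y - s) := funext hpσ
  have hpos : 0 < ∫ s, p s * gaussianKernel _ σ (x - s) :=
    integral_mul_pos_of_pos hp_nonneg (by rw [hp_int]; exact one_pos)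
      (fun s => gaussianKernel_pos hc _)
      (hp.mul_comp_sub continuous_gaussianKernel (norm_gaussianKernel_le hc.le) x)
  have hlog := (hasGradientAt_integral_mul_gaussianKernel_comp_sub hp hp_moment' hc.le hσ x).log
    hpos.ne'
  refine ⟨hpos, hlog.differentiableAt, ?_⟩
  rw [hlog.gradient, hm x, smul_comm, smul_sub, inv_smul_smul₀ hpos.ne']

/-- **Tweedie's formula.** Let `p` be a probability density on `ℝⁿ` with finite
first moment, let `φ_σ` be the isotropic Gaussian kernel with variance `σ²`,
let `p_σ = p * φ_σ` (Gaussian smoothing) and let `m x` be the posterior mean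
`E[s | x]`. Then for every `x`, `p_σ x > 0`, `x ↦ log (p_σ x)` is differentiable
at `x`, and its gradient equals `(σ²)⁻¹ • (m x − x)`. -/
theorem tweedie_formula
    (n : ℕ) (hn : 1 ≤ n)
    (p : EuclideanSpace ℝ (Fin n) → ℝ)
    (hp_meas : Measurable p)
    (hp_nonneg : ∀ s, 0 ≤ p s)
    (hp_int : ∫ s, p s = 1)
    (hp_moment : Integrable (fun s : EuclideanSpace ℝ (Fin n) => ‖s‖ * p s))
    (σ : ℝ) (hσ : 0 < σ)
    (φ : EuclideanSpace ℝ (Fin n) → ℝ)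
    (hφ : ∀ y, φ y =
      (2 * Real.pi * σ ^ 2) ^ (-(n : ℝ) / 2) * Real.exp (-‖y‖ ^ 2 / (2 * σ ^ 2)))
    (pσ : EuclideanSpace ℝ (Fin n) → ℝ)
    (hpσ : ∀ x, pσ x = ∫ s, p s * φ (x - s))
    (m : EuclideanSpace ℝ (Fin n) → EuclideanSpace ℝ (Fin n))
    (hm : ∀ x, m x = (pσ x)⁻¹ • ∫ s, (p s * φ (x - s)) • s)
    (x : EuclideanSpace ℝ (Fin n)) :
    0 < pσ x ∧
    DifferentiableAt ℝ (fun y => Real.log (pσ y)) x ∧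
    gradient (fun y => Real.log (pσ y)) x = (σ ^ 2)⁻¹ • (m x - x) :=
  tweedie_formula_general n p hp_nonneg hp_int hp_moment σ hσ φ hφ pσ hpσ m hm x
end
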